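/- arXiv:2206.02834 — 6 statements merged into one kernel-verified Lean document; each statement's English description precedes it below -/
import Mathlib

section
/- Let μ: ℝ → ℝ be continuously differentiable with derivative μ̇, let Θ ⊆ ℝ^d be convex, let S be a finite set of vectors in ℝ^d, let m_a > 0 for each a ∈ S, and suppose Ṽ = Σ_{a∈S} m_a a a' is positive definite. Assume there exist constants 0 < k₁ ≤ k₂ such that k₁ ≤ μ̇(⟨θ, a⟩) ≤ k₂ for all θ ∈ Θ and all a ∈ S. Define h(θ) = Σ_{a∈S} m_a μ(⟨θ, a⟩) a. Then for any θ₁, θ₂ ∈ Θ there exists a symmetric positive-definite d × d matrix G satisfying k₁ Ṽ ≼ G ≼ k₂ Ṽ in the Loewner order and h(θ₁) − h(θ₂) = G (θ₁ − θ₂). -/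
/-!
Along the segment `θ₂ + t (θ₁ - θ₂)` each coordinate `μ(⟨θ, a⟩)` satisfies the fundamental theorem
of calculus, so `μ(⟨θ₁, a⟩) - μ(⟨θ₂, a⟩) = c_a ⟨θ₁ - θ₂, a⟩` with `c_a` the average of `μ̇` over
the segment. Convexity keeps the segment in `Θ`, hence `k₁ ≤ c_a ≤ k₂`, and
`G = Σ_{a ∈ S} m_a c_a a a'` does the job: `G - k₁ Ṽ` and `k₂ Ṽ - G` are nonnegative combinations
of the rank-one matrices `a a'`, and `G ≽ k₁ Ṽ` is positive definite.
-/

open Matrix Set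

theorem sub_eq_mul_integral_deriv {f : ℝ → ℝ} (hf : ContDiff ℝ 1 f) (x v : ℝ) :
    f (x + v) - f x = v * ∫ t in (0 : ℝ)..1, deriv f (x + t * v) :=
  (intervalIntegral.integral_unitInterval_deriv_eq_sub
    ((hf.continuous_deriv le_rfl).comp_continuousOn (by fun_prop))
    fun t _ => ((hf.differentiable one_ne_zero) _).hasDerivAt).symm

theorem intervalIntegral.integral_unitInterval_mem_Icc {g : ℝ → ℝ} {k₁ k₂ : ℝ}
    (hg : ContinuousOn g (Icc 0 1)) (hbound : ∀ t ∈ Icc (0 : ℝ) 1, g t ∈ Icc k₁ k₂) :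
    ∫ t in (0 : ℝ)..1, g t ∈ Icc k₁ k₂ := by
  have hint : IntervalIntegrable g MeasureTheory.volume 0 1 :=
    hg.intervalIntegrable_of_Icc zero_le_one
  constructor
  · simpa using integral_mono_on zero_le_one intervalIntegrable_const hint
      fun t ht => (hbound t ht).1
  · simpa using integral_mono_on zero_le_one hint intervalIntegrable_const
      fun t ht => (hbound t ht).2

namespace Matrix

variable {n ι : Type*} [Fintype n] {s : Finset ι} {v : ι → n → ℝ}

theorem posSemidef_sum_smul_vecMulVec_self {c : ι → ℝ} (hc : ∀ i ∈ s, 0 ≤ c i) :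
    (∑ i ∈ s, c i • vecMulVec (v i) (v i)).PosSemidef :=
  posSemidef_sum s fun i hi => by
    simpa using (posSemidef_vecMulVec_self_star (v i)).smul (hc i hi)

theorem posSemidef_sum_smul_vecMulVec_self_sub {w c c' : ι → ℝ} (hw : ∀ i ∈ s, 0 ≤ w i)
    (hc : ∀ i ∈ s, c i ≤ c' i) :
    (∑ i ∈ s, (w i * c' i) • vecMulVec (v i) (v i) -
      ∑ i ∈ s, (w i * c i) • vecMulVec (v i) (v i)).PosSemidef := by
  simp_rw [← Finset.sum_sub_distrib, ← sub_smul, ← mul_sub]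
  exact posSemidef_sum_smul_vecMulVec_self fun i hi =>
    mul_nonneg (hw i hi) (sub_nonneg.2 (hc i hi))

theorem sum_smul_vecMulVec_self_mulVec (c : ι → ℝ) (x : n → ℝ) :
    (∑ i ∈ s, c i • vecMulVec (v i) (v i)) *ᵥ x = ∑ i ∈ s, (c i * (v i ⬝ᵥ x)) • v i := by
  simp [sum_mulVec, smul_mulVec, vecMulVec_mulVec, smul_smul]

end Matrix

theorem stmt4_general (d : ℕ) (μ : ℝ → ℝ) (hμ : ContDiff ℝ 1 μ)
    (Θ : Set (Fin d → ℝ)) (hΘ : Convex ℝ Θ)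
    (S : Finset (Fin d → ℝ)) (m : (Fin d → ℝ) → ℝ) (hm : ∀ a ∈ S, 0 < m a)
    (Vt : Matrix (Fin d) (Fin d) ℝ)
    (hVt_def : Vt = ∑ a ∈ S, m a • vecMulVec a a) (hVt : Vt.PosDef)
    (k₁ k₂ : ℝ) (hk₁ : 0 < k₁)
    (hderiv : ∀ θ ∈ Θ, ∀ a ∈ S, k₁ ≤ deriv μ (θ ⬝ᵥ a) ∧ deriv μ (θ ⬝ᵥ a) ≤ k₂)
    (h : (Fin d → ℝ) → (Fin d → ℝ))
    (h_def : ∀ θ, h θ = ∑ a ∈ S, (m a * μ (θ ⬝ᵥ a)) • a)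
    (θ₁ θ₂ : Fin d → ℝ) (hθ₁ : θ₁ ∈ Θ) (hθ₂ : θ₂ ∈ Θ) :
    ∃ G : Matrix (Fin d) (Fin d) ℝ, G.IsSymm ∧ G.PosDef ∧
      (G - k₁ • Vt).PosSemidef ∧ (k₂ • Vt - G).PosSemidef ∧
      h θ₁ - h θ₂ = G *ᵥ (θ₁ - θ₂) := by
  set c : (Fin d → ℝ) → ℝ := fun a =>
    ∫ t in (0 : ℝ)..1, deriv μ (θ₂ ⬝ᵥ a + t * ((θ₁ - θ₂) ⬝ᵥ a))
  have hsegment (a : Fin d → ℝ) (t : ℝ) :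
      θ₂ ⬝ᵥ a + t * ((θ₁ - θ₂) ⬝ᵥ a) = (θ₂ + t • (θ₁ - θ₂)) ⬝ᵥ a := by
    simp [add_dotProduct]
  have hc : ∀ a ∈ S, c a ∈ Icc k₁ k₂ := fun a ha =>
    intervalIntegral.integral_unitInterval_mem_Icc
      ((hμ.continuous_deriv le_rfl).comp_continuousOn (by fun_prop))
      fun t ht => by
        rw [hsegment]
        exact hderiv _ (hΘ.add_smul_sub_mem hθ₂ hθ₁ ht) a ha
  have hmvt (a : Fin d → ℝ) : μ (θ₁ ⬝ᵥ a) - μ (θ₂ ⬝ᵥ a) = c a * ((θ₁ - θ₂) ⬝ᵥ a) := by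
    rw [mul_comm, ← sub_eq_mul_integral_deriv hμ, ← add_dotProduct, add_sub_cancel]
  have hkVt (k : ℝ) : k • Vt = ∑ a ∈ S, (m a * k) • vecMulVec a a := by
    simp_rw [hVt_def, Finset.smul_sum, smul_smul, mul_comm k]
  have hm₀ : ∀ a ∈ S, 0 ≤ m a := fun a ha => (hm a ha).le
  have hlower := hkVt k₁ ▸ posSemidef_sum_smul_vecMulVec_self_sub hm₀ fun a ha => (hc a ha).1
  have hupper := hkVt k₂ ▸ posSemidef_sum_smul_vecMulVec_self_sub hm₀ fun a ha => (hc a ha).2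
  have hG : (∑ a ∈ S, (m a * c a) • vecMulVec a a).PosDef := by
    simpa using (hVt.smul hk₁).add_posSemidef hlower
  refine ⟨_, isHermitian_iff_isSymm.1 hG.isHermitian, hG, hlower, hupper, ?_⟩
  rw [sum_smul_vecMulVec_self_mulVec, h_def, h_def, ← Finset.sum_sub_distrib]
  refine Finset.sum_congr rfl fun a _ => ?_
  rw [← sub_smul, ← mul_sub, hmvt, dotProduct_comm, mul_assoc]

/-- Mean value theorem for the map `h(θ) = Σ_{a∈S} m_a μ(⟨θ,a⟩) a`: for
`θ₁, θ₂` in a convex set `Θ` there is a symmetric positive-definite matrix `G` with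
`k₁ Ṽ ≼ G ≼ k₂ Ṽ` and `h(θ₁) − h(θ₂) = G (θ₁ − θ₂)`. -/
theorem stmt4 (d : ℕ) (μ : ℝ → ℝ) (hμ : ContDiff ℝ 1 μ)
    (Θ : Set (Fin d → ℝ)) (hΘ : Convex ℝ Θ)
    (S : Finset (Fin d → ℝ)) (m : (Fin d → ℝ) → ℝ) (hm : ∀ a ∈ S, 0 < m a)
    (Vt : Matrix (Fin d) (Fin d) ℝ)
    (hVt_def : Vt = ∑ a ∈ S, m a • vecMulVec a a) (hVt : Vt.PosDef)
    (k₁ k₂ : ℝ) (hk₁ : 0 < k₁) (hk₁₂ : k₁ ≤ k₂)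
    (hderiv : ∀ θ ∈ Θ, ∀ a ∈ S, k₁ ≤ deriv μ (θ ⬝ᵥ a) ∧ deriv μ (θ ⬝ᵥ a) ≤ k₂)
    (h : (Fin d → ℝ) → (Fin d → ℝ))
    (h_def : ∀ θ, h θ = ∑ a ∈ S, (m a * μ (θ ⬝ᵥ a)) • a)
    (θ₁ θ₂ : Fin d → ℝ) (hθ₁ : θ₁ ∈ Θ) (hθ₂ : θ₂ ∈ Θ) :
    ∃ G : Matrix (Fin d) (Fin d) ℝ, G.IsSymm ∧ G.PosDef ∧
      (G - k₁ • Vt).PosSemidef ∧ (k₂ • Vt - G).PosSemidef ∧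
      h θ₁ - h θ₂ = G *ᵥ (θ₁ - θ₂) :=
  stmt4_general d μ hμ Θ hΘ S m hm Vt hVt_def hVt k₁ k₂ hk₁ hderiv h h_def θ₁ θ₂ hθ₁ hθ₂
end

section
/- Let μ: ℝ → ℝ be continuously differentiable with derivative μ̇, let Θ ⊆ ℝ^d be convex, let S be a finite set of vectors in ℝ^d, let m_a > 0 for each a ∈ S, and suppose Ṽ = Σ_{a∈S} m_a a a' is positive definite. Assume there exists k₁ > 0 such that μ̇(⟨θ, a⟩) ≥ k₁ for all θ ∈ Θ and all a ∈ S, and define h(θ) = Σ_{a∈S} m_a μ(⟨θ, a⟩) a. Then for all θ₁, θ₂ ∈ Θ with θ₁ ≠ θ₂ one has ⟨θ₁ − θ₂, h(θ₁) − h(θ₂)⟩ > 0; in particular, h is injective on Θ. -/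
/-!
For each `a ∈ S` the values `⟪θ, a⟫`, `θ ∈ Θ`, form an interval on which `μ̇ ≥ k₁`, so the mean
value theorem gives `(μ ⟪θ₁, a⟫ - μ ⟪θ₂, a⟫) ⟪θ₁ - θ₂, a⟫ ≥ k₁ ⟪θ₁ - θ₂, a⟫²`. Summing with the
weights `m a` yields `⟪θ₁ - θ₂, h θ₁ - h θ₂⟫ ≥ k₁ (θ₁ - θ₂)' Ṽ (θ₁ - θ₂)`, which is positive since
`Ṽ` is positive definite.
-/

open Matrix Finset

theorem Convex.mul_sq_le_image_sub_mul_sub_of_le_deriv {D : Set ℝ} (hD : Convex ℝ D)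
    {f : ℝ → ℝ} (hf : Differentiable ℝ f) {C : ℝ} (hC : ∀ x ∈ D, C ≤ deriv f x)
    {x y : ℝ} (hx : x ∈ D) (hy : y ∈ D) :
    C * (x - y) ^ 2 ≤ (f x - f y) * (x - y) := by
  have hgrowth := hD.mul_sub_le_image_sub_of_le_deriv hf.continuous.continuousOn
    hf.differentiableOn fun z hz ↦ hC z (interior_subset hz)
  rcases le_total x y with hxy | hyx
  · nlinarith [hgrowth x hx y hy hxy]
  · nlinarith [hgrowth y hy x hx hyx]

section

variable {n : Type*} [Fintype n]

theorem dotProduct_sum_smul_vecMulVec_mulVec {R : Type*} [CommRing R] (S : Finset (n → R))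
    (m : (n → R) → R) (u : n → R) :
    u ⬝ᵥ (∑ a ∈ S, m a • vecMulVec a a) *ᵥ u = ∑ a ∈ S, m a * (u ⬝ᵥ a) ^ 2 := by
  simp only [sum_mulVec, dotProduct_sum, smul_mulVec, vecMulVec_mulVec, dotProduct_smul]
  refine sum_congr rfl fun a _ ↦ ?_
  simp only [MulOpposite.smul_eq_mul_unop, MulOpposite.unop_op, smul_eq_mul, dotProduct_comm a u]
  ring

theorem mul_dotProduct_mulVec_le_dotProduct_sub_sum_smul {μ : ℝ → ℝ} (hμ : Differentiable ℝ μ)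
    {Θ : Set (n → ℝ)} (hΘ : Convex ℝ Θ) {S : Finset (n → ℝ)} {m : (n → ℝ) → ℝ}
    (hm : ∀ a ∈ S, 0 ≤ m a) {k : ℝ} (hk : ∀ θ ∈ Θ, ∀ a ∈ S, k ≤ deriv μ (θ ⬝ᵥ a))
    {θ₁ θ₂ : n → ℝ} (hθ₁ : θ₁ ∈ Θ) (hθ₂ : θ₂ ∈ Θ) :
    k * ((θ₁ - θ₂) ⬝ᵥ (∑ a ∈ S, m a • vecMulVec a a) *ᵥ (θ₁ - θ₂)) ≤
      (θ₁ - θ₂) ⬝ᵥ (∑ a ∈ S, (m a * μ (θ₁ ⬝ᵥ a)) • a - ∑ a ∈ S, (m a * μ (θ₂ ⬝ᵥ a)) • a) := by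
  rw [dotProduct_sum_smul_vecMulVec_mulVec, dotProduct_sub, dotProduct_sum, dotProduct_sum,
    ← sum_sub_distrib, mul_sum]
  refine sum_le_sum fun a ha ↦ ?_
  have hD : Convex ℝ ((· ⬝ᵥ a) '' Θ) :=
    hΘ.is_linear_image ⟨fun x y ↦ add_dotProduct x y a, fun c x ↦ smul_dotProduct c x a⟩
  have hsq := hD.mul_sq_le_image_sub_mul_sub_of_le_deriv hμ
    (by rintro _ ⟨θ, hθ, rfl⟩; exact hk θ hθ a ha) (Set.mem_image_of_mem _ hθ₁)
    (Set.mem_image_of_mem _ hθ₂)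
  simp only [dotProduct_smul, smul_eq_mul, sub_dotProduct] at hsq ⊢
  nlinarith [mul_le_mul_of_nonneg_left hsq (hm a ha)]

theorem Set.injOn_of_dotProduct_sub_pos {R : Type*} [CommRing R] [PartialOrder R]
    {f : (n → R) → n → R} {s : Set (n → R)}
    (hf : ∀ x ∈ s, ∀ y ∈ s, x ≠ y → 0 < (x - y) ⬝ᵥ (f x - f y)) : InjOn f s := by
  intro x hx y hy hxy
  by_contra hne
  simpa [hxy] using hf x hx y hy hne

end

/-- If the link function has derivative bounded below by `k₁ > 0` along
`⟨θ, a⟩` for `θ ∈ Θ`, `a ∈ S`, then `h(θ) = Σ_{a∈S} m_a μ(⟨θ,a⟩) a` is strictly monotone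
(`⟨θ₁ − θ₂, h(θ₁) − h(θ₂)⟩ > 0` for `θ₁ ≠ θ₂`) and hence injective on `Θ`. -/
theorem stmt5 (d : ℕ) (μ : ℝ → ℝ) (hμ : ContDiff ℝ 1 μ)
    (Θ : Set (Fin d → ℝ)) (hΘ : Convex ℝ Θ)
    (S : Finset (Fin d → ℝ)) (m : (Fin d → ℝ) → ℝ) (hm : ∀ a ∈ S, 0 < m a)
    (Vt : Matrix (Fin d) (Fin d) ℝ)
    (hVt_def : Vt = ∑ a ∈ S, m a • vecMulVec a a) (hVt : Vt.PosDef)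
    (k₁ : ℝ) (hk₁ : 0 < k₁)
    (hderiv : ∀ θ ∈ Θ, ∀ a ∈ S, k₁ ≤ deriv μ (θ ⬝ᵥ a))
    (h : (Fin d → ℝ) → (Fin d → ℝ))
    (h_def : ∀ θ, h θ = ∑ a ∈ S, (m a * μ (θ ⬝ᵥ a)) • a) :
    (∀ θ₁ ∈ Θ, ∀ θ₂ ∈ Θ, θ₁ ≠ θ₂ → 0 < (θ₁ - θ₂) ⬝ᵥ (h θ₁ - h θ₂)) ∧
    Set.InjOn h Θ := by
  have hmono : ∀ θ₁ ∈ Θ, ∀ θ₂ ∈ Θ, θ₁ ≠ θ₂ → 0 < (θ₁ - θ₂) ⬝ᵥ (h θ₁ - h θ₂) := by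
    intro θ₁ hθ₁ θ₂ hθ₂ hne
    have hquad : 0 < (θ₁ - θ₂) ⬝ᵥ Vt *ᵥ (θ₁ - θ₂) := by
      simpa using hVt.dotProduct_mulVec_pos (sub_ne_zero.mpr hne)
    calc 0 < k₁ * ((θ₁ - θ₂) ⬝ᵥ Vt *ᵥ (θ₁ - θ₂)) := mul_pos hk₁ hquad
      _ ≤ (θ₁ - θ₂) ⬝ᵥ (h θ₁ - h θ₂) := by
        rw [hVt_def, h_def, h_def]
        exact mul_dotProduct_mulVec_le_dotProduct_sub_sum_smul (hμ.differentiable one_ne_zero)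
          hΘ (fun a ha ↦ (hm a ha).le) hderiv hθ₁ hθ₂
  exact ⟨hmono, Set.injOn_of_dotProduct_sub_pos hmono⟩
end

section
/- Let μ: ℝ → ℝ be continuously differentiable with derivative μ̇, let Θ ⊆ ℝ^d be convex, let S be a finite set of vectors in ℝ^d, let m_a > 0 for each a ∈ S, and suppose Ṽ = Σ_{a∈S} m_a a a' is positive definite with positive-definite square root Ṽ^{1/2}. Define h(θ) = Σ_{a∈S} m_a μ(⟨θ, a⟩) a, and assume there is k₁ > 0 such that μ̇(⟨θ, a⟩) ≥ k₁ for all θ ∈ Θ and all a ∈ S. Let θ*, θ̂ ∈ Θ, X ∈ ℝ^d, and E ≥ 0 satisfy h(θ̂) = Ṽ^{1/2} X and ‖X − Ṽ^{-1/2} h(θ*)‖ ≤ E. Then for every a ∈ ℝ^d, |⟨θ̂ − θ*, a⟩| ≤ (E / k₁) · √(a' Ṽ^{-1} a). -/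
/-!
Write `Δ = θ̂ - θ*` and `R = Ṽ^{1/2}`. For each `a ∈ S` the images of `Θ` under `⟨·, a⟩` form an
interval on which `μ' ≥ k₁`, so the mean value theorem gives
`(μ ⟨θ̂, a⟩ - μ ⟨θ*, a⟩) ⟨Δ, a⟩ ≥ k₁ ⟨Δ, a⟩²`; summing with weights `m_a` yields
`⟨Δ, h θ̂ - h θ*⟩ ≥ k₁ Δ'ṼΔ = k₁ ‖RΔ‖²`. Since `h θ̂ - h θ* = R (X - R⁻¹ h θ*)` and `R` is symmetric,
Cauchy–Schwarz bounds the left side by `‖RΔ‖ E`, so `‖RΔ‖ ≤ E / k₁`. Finally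
`⟨Δ, a⟩ = ⟨RΔ, R⁻¹a⟩ ≤ ‖RΔ‖ √(a'Ṽ⁻¹a)`.
-/

open Matrix

namespace Matrix.PosSemidef

open scoped ComplexOrder

/-- The positive semidefinite square root of a positive semidefinite matrix, as defined in the
older Mathlib (removed since). -/
noncomputable def sqrt {n 𝕜 : Type*} [Fintype n] [DecidableEq n] [RCLike 𝕜] {A : Matrix n n 𝕜}
    (hA : A.PosSemidef) : Matrix n n 𝕜 :=
  hA.1.eigenvectorUnitary.1 * diagonal ((↑) ∘ (√·) ∘ hA.1.eigenvalues) *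
    (star hA.1.eigenvectorUnitary : Matrix n n 𝕜)

end Matrix.PosSemidef

namespace Matrix.PosSemidef

open scoped ComplexOrder

variable {n 𝕜 : Type*} [Fintype n] [DecidableEq n] [RCLike 𝕜] {A : Matrix n n 𝕜}

theorem sqrt_mul_self (hA : A.PosSemidef) : sqrt hA * sqrt hA = A := by
  have hU : star (hA.1.eigenvectorUnitary : Matrix n n 𝕜) * hA.1.eigenvectorUnitary = 1 :=
    Unitary.coe_star_mul_self _
  have hD : diagonal ((↑) ∘ (√·) ∘ hA.1.eigenvalues : n → 𝕜) *
      diagonal ((↑) ∘ (√·) ∘ hA.1.eigenvalues) = diagonal ((↑) ∘ hA.1.eigenvalues) := by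
    rw [diagonal_mul_diagonal]
    congr 1
    funext i
    simp [← RCLike.ofReal_mul, Real.mul_self_sqrt (hA.eigenvalues_nonneg i)]
  conv_rhs => rw [hA.1.spectral_theorem, Unitary.conjStarAlgAut_apply, ← hD]
  simp only [sqrt, Matrix.mul_assoc]
  rw [← Matrix.mul_assoc (star _) _, hU, Matrix.one_mul]

theorem isHermitian_sqrt (hA : A.PosSemidef) : (sqrt hA).IsHermitian := by
  simp only [IsHermitian, sqrt, conjTranspose_mul, diagonal_conjTranspose, star_eq_conjTranspose,
    conjTranspose_conjTranspose, Matrix.mul_assoc]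
  congr 3
  funext i
  simp

end Matrix.PosSemidef

theorem mul_sq_le_sub_mul_sub_of_le_deriv {D : Set ℝ} (hD : Convex ℝ D) {f : ℝ → ℝ}
    (hf : DifferentiableOn ℝ f D) {k : ℝ} (hk : ∀ x ∈ D, k ≤ deriv f x) {x y : ℝ}
    (hx : x ∈ D) (hy : y ∈ D) : k * (y - x) ^ 2 ≤ (f y - f x) * (y - x) := by
  have hslope := hD.mul_sub_le_image_sub_of_le_deriv hf.continuousOn
    (hf.mono interior_subset) fun z hz => hk z (interior_subset hz)
  rcases le_total x y with hxy | hyx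
  · nlinarith [hslope x hx y hy hxy]
  · nlinarith [hslope y hy x hx hyx]

namespace Matrix

variable {ι : Type*} [Fintype ι]

theorem dotProduct_self_nonneg (v : ι → ℝ) : 0 ≤ v ⬝ᵥ v :=
  Finset.sum_nonneg fun i _ => mul_self_nonneg (v i)

theorem abs_dotProduct_le (u v : ι → ℝ) : |u ⬝ᵥ v| ≤ √(u ⬝ᵥ u) * √(v ⬝ᵥ v) := by
  rw [← Real.sqrt_mul (dotProduct_self_nonneg u), ← Real.sqrt_sq_eq_abs]
  refine Real.sqrt_le_sqrt ?_
  simpa [dotProduct, sq] using Finset.sum_mul_sq_le_sq_mul_sq Finset.univ u v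

theorem sqrt_dotProduct_self_le_of_mul_le {u w : ι → ℝ} {k E : ℝ} (hk : 0 < k)
    (huw : k * (u ⬝ᵥ u) ≤ u ⬝ᵥ w) (hw : √(w ⬝ᵥ w) ≤ E) : √(u ⬝ᵥ u) ≤ E / k := by
  set s := √(u ⬝ᵥ u)
  have hs : s ^ 2 = u ⬝ᵥ u := Real.sq_sqrt (dotProduct_self_nonneg u)
  have hks : k * s ^ 2 ≤ s * E := by
    calc k * s ^ 2 ≤ u ⬝ᵥ w := hs ▸ huw
      _ ≤ s * √(w ⬝ᵥ w) := (le_abs_self _).trans (abs_dotProduct_le u w)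
      _ ≤ s * E := mul_le_mul_of_nonneg_left hw (Real.sqrt_nonneg _)
  rcases (Real.sqrt_nonneg _ : 0 ≤ s).eq_or_lt with hs0 | hs0
  · calc s = 0 := hs0.symm
      _ ≤ E / k := div_nonneg ((Real.sqrt_nonneg _).trans hw) hk.le
  · rw [le_div_iff₀ hk]
    nlinarith

theorem IsSymm.dotProduct_mulVec_comm {R : Matrix ι ι ℝ} (hR : R.IsSymm) (u w : ι → ℝ) :
    u ⬝ᵥ (R *ᵥ w) = (R *ᵥ u) ⬝ᵥ w := by
  rw [dotProduct_mulVec, ← mulVec_transpose, hR.eq]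

theorem IsSymm.mulVec_dotProduct_mulVec_self {R : Matrix ι ι ℝ} (hR : R.IsSymm) (v : ι → ℝ) :
    (R *ᵥ v) ⬝ᵥ (R *ᵥ v) = v ⬝ᵥ ((R * R) *ᵥ v) := by
  rw [← hR.dotProduct_mulVec_comm, mulVec_mulVec]

theorem dotProduct_sum_smul_vecMulVec_mulVec {R : Type*} [CommSemiring R] (S : Finset (ι → R))
    (m : (ι → R) → R) (v : ι → R) :
    v ⬝ᵥ ((∑ a ∈ S, m a • vecMulVec a a) *ᵥ v) = ∑ a ∈ S, m a * (v ⬝ᵥ a) ^ 2 := by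
  simp only [sum_mulVec, dotProduct_sum, smul_mulVec, vecMulVec_mulVec, dotProduct_smul,
    smul_eq_mul, op_smul_eq_mul, dotProduct_comm _ v, sq]

theorem mul_dotProduct_mulVec_le_dotProduct_sub {Θ : Set (ι → ℝ)} (hΘ : Convex ℝ Θ)
    {μ : ℝ → ℝ} (hμ : Differentiable ℝ μ) {S : Finset (ι → ℝ)} {m : (ι → ℝ) → ℝ}
    (hm : ∀ a ∈ S, 0 ≤ m a) {k : ℝ} (hderiv : ∀ θ ∈ Θ, ∀ a ∈ S, k ≤ deriv μ (θ ⬝ᵥ a))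
    {θ θ' : ι → ℝ} (hθ : θ ∈ Θ) (hθ' : θ' ∈ Θ) :
    k * ((θ - θ') ⬝ᵥ ((∑ a ∈ S, m a • vecMulVec a a) *ᵥ (θ - θ'))) ≤
      (θ - θ') ⬝ᵥ (∑ a ∈ S, (m a * μ (θ ⬝ᵥ a)) • a - ∑ a ∈ S, (m a * μ (θ' ⬝ᵥ a)) • a) := by
  rw [dotProduct_sum_smul_vecMulVec_mulVec, ← Finset.sum_sub_distrib, dotProduct_sum,
    Finset.mul_sum]
  refine Finset.sum_le_sum fun a ha => ?_
  have hD : Convex ℝ ((· ⬝ᵥ a) '' Θ) := hΘ.is_linear_image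
    ⟨fun x y => add_dotProduct x y a, fun c x => smul_dotProduct c x a⟩
  have key := mul_sq_le_sub_mul_sub_of_le_deriv hD hμ.differentiableOn
    (by rintro _ ⟨φ, hφ, rfl⟩; exact hderiv φ hφ a ha) ⟨θ', hθ', rfl⟩ ⟨θ, hθ, rfl⟩
  rw [← sub_smul, dotProduct_smul, smul_eq_mul, sub_dotProduct, ← mul_sub]
  calc k * (m a * (θ ⬝ᵥ a - θ' ⬝ᵥ a) ^ 2) = m a * (k * (θ ⬝ᵥ a - θ' ⬝ᵥ a) ^ 2) := by ring
    _ ≤ m a * ((μ (θ ⬝ᵥ a) - μ (θ' ⬝ᵥ a)) * (θ ⬝ᵥ a - θ' ⬝ᵥ a)) :=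
      mul_le_mul_of_nonneg_left key (hm a ha)
    _ = m a * (μ (θ ⬝ᵥ a) - μ (θ' ⬝ᵥ a)) * (θ ⬝ᵥ a - θ' ⬝ᵥ a) := by ring

variable [DecidableEq ι]

theorem IsSymm.abs_dotProduct_le {R : Matrix ι ι ℝ} (hR : R.IsSymm) (hdet : IsUnit R.det)
    (v a : ι → ℝ) : |v ⬝ᵥ a| ≤ √((R *ᵥ v) ⬝ᵥ (R *ᵥ v)) * √(a ⬝ᵥ ((R * R)⁻¹ *ᵥ a)) := by
  have hv : v ⬝ᵥ a = (R *ᵥ v) ⬝ᵥ (R⁻¹ *ᵥ a) := by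
    rw [← hR.dotProduct_mulVec_comm, mulVec_mulVec, mul_nonsing_inv _ hdet, one_mulVec]
  rw [hv, mul_inv_rev, ← hR.inv.mulVec_dotProduct_mulVec_self]
  exact Matrix.abs_dotProduct_le _ _

end Matrix

theorem stmt8_general (d : ℕ) (μ : ℝ → ℝ) (hμ : ContDiff ℝ 1 μ)
    (Θ : Set (Fin d → ℝ)) (hΘ : Convex ℝ Θ)
    (S : Finset (Fin d → ℝ)) (m : (Fin d → ℝ) → ℝ) (hm : ∀ a ∈ S, 0 < m a)
    (Vt : Matrix (Fin d) (Fin d) ℝ)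
    (hVt_def : Vt = ∑ a ∈ S, m a • vecMulVec a a) (hVt : Vt.PosDef)
    (h : (Fin d → ℝ) → (Fin d → ℝ))
    (h_def : ∀ θ, h θ = ∑ a ∈ S, (m a * μ (θ ⬝ᵥ a)) • a)
    (k₁ : ℝ) (hk₁ : 0 < k₁)
    (hderiv : ∀ θ ∈ Θ, ∀ a ∈ S, k₁ ≤ deriv μ (θ ⬝ᵥ a))
    (θstar θhat : Fin d → ℝ) (hθstar : θstar ∈ Θ) (hθhat : θhat ∈ Θ)
    (X : Fin d → ℝ) (E : ℝ)
    (hX : h θhat = Matrix.PosSemidef.sqrt hVt.posSemidef *ᵥ X)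
    (hXE : Real.sqrt ((X - (Matrix.PosSemidef.sqrt hVt.posSemidef)⁻¹ *ᵥ h θstar) ⬝ᵥ
              (X - (Matrix.PosSemidef.sqrt hVt.posSemidef)⁻¹ *ᵥ h θstar)) ≤ E)
    (a : Fin d → ℝ) :
    |(θhat - θstar) ⬝ᵥ a| ≤ (E / k₁) * Real.sqrt (a ⬝ᵥ (Vt⁻¹ *ᵥ a)) := by
  set R := Matrix.PosSemidef.sqrt hVt.posSemidef
  have hRsymm : R.IsSymm := isHermitian_iff_isSymm.mp (PosSemidef.isHermitian_sqrt _)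
  have hRR : R * R = Vt := PosSemidef.sqrt_mul_self _
  have hRdet : IsUnit R.det :=
    isUnit_of_mul_isUnit_left (by rw [← det_mul, hRR]; exact hVt.det_pos.ne'.isUnit)
  have hdiff : h θhat - h θstar = R *ᵥ (X - R⁻¹ *ᵥ h θstar) := by
    rw [mulVec_sub, mulVec_mulVec, mul_nonsing_inv _ hRdet, one_mulVec, hX]
  have hmono : k₁ * ((R *ᵥ (θhat - θstar)) ⬝ᵥ (R *ᵥ (θhat - θstar))) ≤
      (R *ᵥ (θhat - θstar)) ⬝ᵥ (X - R⁻¹ *ᵥ h θstar) := by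
    rw [hRsymm.mulVec_dotProduct_mulVec_self, hRR, ← hRsymm.dotProduct_mulVec_comm, ← hdiff,
      h_def, h_def, hVt_def]
    exact mul_dotProduct_mulVec_le_dotProduct_sub hΘ (hμ.differentiable one_ne_zero)
      (fun b hb => (hm b hb).le) hderiv hθhat hθstar
  calc |(θhat - θstar) ⬝ᵥ a|
      ≤ √((R *ᵥ (θhat - θstar)) ⬝ᵥ (R *ᵥ (θhat - θstar))) * √(a ⬝ᵥ ((R * R)⁻¹ *ᵥ a)) :=
        hRsymm.abs_dotProduct_le hRdet _ _
    _ ≤ E / k₁ * √(a ⬝ᵥ (Vt⁻¹ *ᵥ a)) := by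
        rw [hRR]
        gcongr
        exact sqrt_dotProduct_self_le_of_mul_le hk₁ hmono hXE

/-- If `h(θ̂) = Ṽ^{1/2} X` and `‖X − Ṽ^{-1/2} h(θ*)‖ ≤ E`, then for every
vector `a`, `|⟨θ̂ − θ*, a⟩| ≤ (E/k₁) √(a' Ṽ⁻¹ a)`. Euclidean norms are written via
`√(w ⬝ᵥ w)`, and `Ṽ^{1/2}` is the positive-definite square root of `Ṽ`. -/
theorem stmt8 (d : ℕ) (μ : ℝ → ℝ) (hμ : ContDiff ℝ 1 μ)
    (Θ : Set (Fin d → ℝ)) (hΘ : Convex ℝ Θ)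
    (S : Finset (Fin d → ℝ)) (m : (Fin d → ℝ) → ℝ) (hm : ∀ a ∈ S, 0 < m a)
    (Vt : Matrix (Fin d) (Fin d) ℝ)
    (hVt_def : Vt = ∑ a ∈ S, m a • vecMulVec a a) (hVt : Vt.PosDef)
    (h : (Fin d → ℝ) → (Fin d → ℝ))
    (h_def : ∀ θ, h θ = ∑ a ∈ S, (m a * μ (θ ⬝ᵥ a)) • a)
    (k₁ : ℝ) (hk₁ : 0 < k₁)
    (hderiv : ∀ θ ∈ Θ, ∀ a ∈ S, k₁ ≤ deriv μ (θ ⬝ᵥ a))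
    (θstar θhat : Fin d → ℝ) (hθstar : θstar ∈ Θ) (hθhat : θhat ∈ Θ)
    (X : Fin d → ℝ) (E : ℝ) (hE : 0 ≤ E)
    (hX : h θhat = Matrix.PosSemidef.sqrt hVt.posSemidef *ᵥ X)
    (hXE : Real.sqrt ((X - (Matrix.PosSemidef.sqrt hVt.posSemidef)⁻¹ *ᵥ h θstar) ⬝ᵥ
              (X - (Matrix.PosSemidef.sqrt hVt.posSemidef)⁻¹ *ᵥ h θstar)) ≤ E)
    (a : Fin d → ℝ) :
    |(θhat - θstar) ⬝ᵥ a| ≤ (E / k₁) * Real.sqrt (a ⬝ᵥ (Vt⁻¹ *ᵥ a)) :=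
  stmt8_general d μ hμ Θ hΘ S m hm Vt hVt_def hVt h h_def k₁ hk₁ hderiv θstar θhat hθstar hθhat X E
    hX hXE a
end

section
/- Let (Ω, F) be a measurable space, let P₁ and P₂ be probability measures on it, and let α ∈ (0,1). If the total variation distance satisfies δ(P₁, P₂) = α/(1−α), then there exist probability measures Q₁ and Q₂ on (Ω, F) such that (1−α) P₁ + α Q₁ = (1−α) P₂ + α Q₂ as measures. Explicitly, one may take Q₁ = ((1−α)/α) · (P₂ − P₁)⁺ and Q₂ = ((1−α)/α) · (P₁ − P₂)⁺, where (P₂ − P₁)⁺ and (P₁ − P₂)⁺ are the positive parts in the Jordan decomposition of the signed measure P₂ − P₁. -/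
/-!
The positive part of the Jordan decomposition of `μ - ν` is the truncated difference `μ - ν` of
measures. Since `ν + (μ - ν) = μ + (ν - μ)`, for measures of equal mass both
truncated differences have the same mass, and `|μ A - ν A|` is at most that mass, with equality on
the positive set of a Hahn decomposition; so this mass is `δ(μ, ν) = α/(1-α)`. Rescaling by
`(1-α)/α` turns the truncated differences into probability measures, and multiplying the identity
`P₁ + (P₂ - P₁) = P₂ + (P₁ - P₂)` by `1 - α` gives the claim.
-/

open MeasureTheory

/-- The total variation distance `δ(P,Q) = sup_{A measurable} |P(A) − Q(A)|`. -/
noncomputable def tvDist {Ω : Type} [MeasurableSpace Ω] (P Q : Measure Ω) : ℝ :=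
  ⨆ A : {A : Set Ω // MeasurableSet A}, |(P A.1).toReal - (Q A.1).toReal|

open Set

namespace MeasureTheory.Measure

variable {Ω : Type*} [MeasurableSpace Ω] (μ ν : Measure Ω) [IsFiniteMeasure μ] [IsFiniteMeasure ν]

theorem add_sub_eq_add_sub_swap : ν + (μ - ν) = μ + (ν - μ) := by
  have h := sub_toSignedMeasure_eq_toSignedMeasure_sub (μ := μ) (ν := ν)
  rw [sub_eq_sub_iff_add_eq_add] at h
  rw [← toSignedMeasure_eq_toSignedMeasure_iff, toSignedMeasure_add, toSignedMeasure_add,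
    add_comm, ← h, add_comm]

theorem toReal_apply_sub_toReal_apply (A : Set Ω) :
    (μ A).toReal - (ν A).toReal = ((μ - ν) A).toReal - ((ν - μ) A).toReal := by
  have h := congrArg (fun m : Measure Ω => (m A).toReal) (add_sub_eq_add_sub_swap μ ν)
  simp only [coe_add, Pi.add_apply] at h
  rw [ENNReal.toReal_add (measure_ne_top _ _) (measure_ne_top _ _),
    ENNReal.toReal_add (measure_ne_top _ _) (measure_ne_top _ _)] at h
  linarith

theorem sub_apply_univ_eq_sub_swap (h : μ univ = ν univ) : (μ - ν) univ = (ν - μ) univ := by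
  have h' := congrArg (· univ) (add_sub_eq_add_sub_swap μ ν)
  simp only [coe_add, Pi.add_apply, h] at h'
  exact (ENNReal.add_right_inj (measure_ne_top _ _)).1 h'

theorem exists_toReal_apply_sub_toReal_apply_eq :
    ∃ A, MeasurableSet A ∧ (μ A).toReal - (ν A).toReal = ((μ - ν) univ).toReal := by
  obtain ⟨t, ht, hμν, hνμ⟩ := mutually_singular_measure_sub (μ := μ) (ν := ν)
  refine ⟨tᶜ, ht.compl, ?_⟩
  rw [toReal_apply_sub_toReal_apply, hνμ, ← measure_add_measure_compl ht, hμν, zero_add,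
    ENNReal.toReal_zero, sub_zero]

theorem isProbabilityMeasure_ofReal_inv_smul {r : ℝ} (hr : 0 < r) (h : (μ univ).toReal = r) :
    IsProbabilityMeasure (ENNReal.ofReal r⁻¹ • μ) := by
  constructor
  rw [smul_apply, smul_eq_mul, ← ENNReal.ofReal_toReal (measure_ne_top μ univ), h,
    ← ENNReal.ofReal_mul (inv_nonneg.2 hr.le), inv_mul_cancel₀ hr.ne', ENNReal.ofReal_one]

end MeasureTheory.Measure

theorem tvDist_comm {Ω : Type} [MeasurableSpace Ω] (P Q : Measure Ω) :
    tvDist P Q = tvDist Q P := by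
  simp only [tvDist, abs_sub_comm]

theorem tvDist_eq_toReal_sub_apply_univ {Ω : Type} [MeasurableSpace Ω] (P Q : Measure Ω)
    [IsFiniteMeasure P] [IsFiniteMeasure Q] (h : P univ = Q univ) :
    tvDist P Q = ((P - Q) univ).toReal := by
  have hle : ∀ A, |(P A).toReal - (Q A).toReal| ≤ ((P - Q) univ).toReal := by
    intro A
    have hPQ : ((P - Q) A).toReal ≤ ((P - Q) univ).toReal :=
      ENNReal.toReal_mono (measure_ne_top _ _) (measure_mono (subset_univ A))
    have hQP : ((Q - P) A).toReal ≤ ((P - Q) univ).toReal := by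
      rw [Measure.sub_apply_univ_eq_sub_swap P Q h]
      exact ENNReal.toReal_mono (measure_ne_top _ _) (measure_mono (subset_univ A))
    rw [Measure.toReal_apply_sub_toReal_apply, abs_sub_le_iff]
    constructor <;> linarith [ENNReal.toReal_nonneg (a := (P - Q) A),
      ENNReal.toReal_nonneg (a := (Q - P) A)]
  obtain ⟨A, hA, hAeq⟩ := Measure.exists_toReal_apply_sub_toReal_apply_eq P Q
  refine le_antisymm (ciSup_le fun A => hle A.1) ?_
  rw [← hAeq]
  exact le_ciSup_of_le ⟨_, forall_mem_range.2 fun A => hle A.1⟩ ⟨A, hA⟩ (le_abs_self _)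

/-- If `δ(P₁, P₂) = α/(1−α)`, then the explicit choices
`Q₁ = ((1−α)/α)(P₂ − P₁)⁺` and `Q₂ = ((1−α)/α)(P₁ − P₂)⁺` (Jordan positive parts) are
probability measures satisfying `(1−α) P₁ + α Q₁ = (1−α) P₂ + α Q₂`. -/
theorem stmt9 {Ω : Type} [MeasurableSpace Ω] (P₁ P₂ : Measure Ω)
    [IsProbabilityMeasure P₁] [IsProbabilityMeasure P₂]
    (α : ℝ) (hα0 : 0 < α) (hα1 : α < 1)
    (htv : tvDist P₁ P₂ = α / (1 - α))
    (Q₁ Q₂ : Measure Ω)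
    (hQ₁ : Q₁ = ENNReal.ofReal ((1 - α) / α) •
        (P₂.toSignedMeasure - P₁.toSignedMeasure).toJordanDecomposition.posPart)
    (hQ₂ : Q₂ = ENNReal.ofReal ((1 - α) / α) •
        (P₁.toSignedMeasure - P₂.toSignedMeasure).toJordanDecomposition.posPart) :
    IsProbabilityMeasure Q₁ ∧ IsProbabilityMeasure Q₂ ∧
      ENNReal.ofReal (1 - α) • P₁ + ENNReal.ofReal α • Q₁
        = ENNReal.ofReal (1 - α) • P₂ + ENNReal.ofReal α • Q₂ := by
  simp only [Measure.toJordanDecomposition_toSignedMeasure_sub,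
    Measure.jordanDecompositionOfToSignedMeasureSub_posPart] at hQ₁ hQ₂
  subst hQ₁ hQ₂
  have hr : 0 < α / (1 - α) := div_pos hα0 (sub_pos.2 hα1)
  have hmass : ∀ μ ν : Measure Ω, [IsProbabilityMeasure μ] → [IsProbabilityMeasure ν] →
      tvDist μ ν = α / (1 - α) → IsProbabilityMeasure (ENNReal.ofReal ((1 - α) / α) • (μ - ν)) :=
    fun μ ν _ _ h => by
      rw [← inv_div]
      exact Measure.isProbabilityMeasure_ofReal_inv_smul _ hr
        (by rw [← tvDist_eq_toReal_sub_apply_univ μ ν (by simp), h])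
  refine ⟨hmass P₂ P₁ (by rw [tvDist_comm, htv]), hmass P₁ P₂ htv, ?_⟩
  rw [smul_smul, smul_smul, ← ENNReal.ofReal_mul hα0.le, mul_div_cancel₀ _ hα0.ne', ← smul_add,
    ← smul_add, Measure.add_sub_eq_add_sub_swap]
end

section
/- Let P and Q be probability measures on the same measurable space (Ω, F), and let A ∈ F be any event. Then P(A) + Q(Aᶜ) ≥ (1/2) exp(−KL(P, Q)), where Aᶜ is the complement of A. (When P is not absolutely continuous with respect to Q, KL(P,Q) = +∞ and the inequality holds trivially.) -/
open MeasureTheory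
open scoped Classical

/-- The Kullback–Leibler divergence `KL(P,Q) = ∫ log(dP/dQ) dP` when `P ≪ Q` (and the
log-likelihood ratio is `P`-integrable), and `+∞` otherwise. -/
noncomputable def klDiv {Ω : Type} [MeasurableSpace Ω] (P Q : Measure Ω) : EReal :=
  if P ≪ Q ∧ Integrable (fun x => Real.log (P.rnDeriv Q x).toReal) P
  then ((∫ x, Real.log (P.rnDeriv Q x).toReal ∂P : ℝ) : EReal)
  else ⊤

/-- `exp : EReal → ℝ≥0∞`, with `exp(−∞) = 0` and `exp(+∞) = ∞`. -/
noncomputable def expEReal (x : EReal) : ENNReal :=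
  if x = ⊤ then ⊤ else if x = ⊥ then 0 else ENNReal.ofReal (Real.exp x.toReal)


/-! Writing `f = dP/dQ`, the quantity `∫ min f 1 dQ` is at most `P(A) + Q(Aᶜ)` for every event `A`.
By Cauchy–Schwarz, the Bhattacharyya coefficient `∫ √f dQ = ∫ √(min f 1 · max f 1) dQ` satisfies
`(∫ √f dQ)² ≤ ∫ min f 1 dQ · ∫ max f 1 dQ ≤ 2 ∫ min f 1 dQ`, since `max f 1 ≤ f + 1`.
Jensen's inequality for `exp` under `P` gives `∫ √f dQ = ∫ exp(-½ log f) dP ≥ exp(-½ KL(P, Q))`. -/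

open Real

section General

variable {α : Type*} [MeasurableSpace α]

theorem ENNReal.sq_lintegral_rpow_half_mul_le {μ : Measure α} {f g : α → ENNReal}
    (hf : AEMeasurable f μ) (hg : AEMeasurable g μ) :
    (∫⁻ x, (f x * g x) ^ (1 / 2 : ℝ) ∂μ) ^ 2 ≤ (∫⁻ x, f x ∂μ) * ∫⁻ x, g x ∂μ := by
  have hsq : ∀ a : ENNReal, (a ^ (1 / 2 : ℝ)) ^ (2 : ℝ) = a := fun a => by
    rw [← ENNReal.rpow_mul]; norm_num
  have holder := ENNReal.lintegral_mul_le_Lp_mul_Lq μ Real.HolderConjugate.two_two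
    (hf.pow_const (1 / 2 : ℝ)) (hg.pow_const (1 / 2 : ℝ))
  simp only [Pi.mul_apply, hsq, ← ENNReal.mul_rpow_of_nonneg _ _ (by norm_num : (0 : ℝ) ≤ 1 / 2)]
    at holder
  calc (∫⁻ x, (f x * g x) ^ (1 / 2 : ℝ) ∂μ) ^ 2
      ≤ (((∫⁻ x, f x ∂μ) * ∫⁻ x, g x ∂μ) ^ (1 / 2 : ℝ)) ^ (2 : ℝ) := by
        rw [ENNReal.rpow_two]; gcongr
    _ = (∫⁻ x, f x ∂μ) * ∫⁻ x, g x ∂μ := hsq _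

theorem ENNReal.ofReal_exp_integral_le_lintegral {μ : Measure α} [IsProbabilityMeasure μ]
    {X : α → ℝ} (hX : Integrable X μ) :
    ENNReal.ofReal (exp (∫ x, X x ∂μ)) ≤ ∫⁻ x, ENNReal.ofReal (exp (X x)) ∂μ := by
  by_cases hfin : ∫⁻ x, ENNReal.ofReal (exp (X x)) ∂μ = ⊤
  · simp [hfin]
  have hpos : 0 ≤ᵐ[μ] fun x => exp (X x) := ae_of_all _ fun x => (exp_pos _).le
  have hexp : Integrable (fun x => exp (X x)) μ :=
    ⟨Real.continuous_exp.comp_aestronglyMeasurable hX.1,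
      (hasFiniteIntegral_iff_ofReal hpos).2 (lt_top_iff_ne_top.2 hfin)⟩
  rw [← ofReal_integral_eq_lintegral_ofReal hexp hpos]
  exact ENNReal.ofReal_le_ofReal <|
    convexOn_exp.map_integral_le continuousOn_exp isClosed_univ (by simp) hX hexp

end General

namespace MeasureTheory.Measure

variable {α : Type*} [MeasurableSpace α]

theorem lintegral_min_rnDeriv_one_le (μ ν : Measure α) {A : Set α} (hA : MeasurableSet A) :
    ∫⁻ x, min (μ.rnDeriv ν x) 1 ∂ν ≤ μ A + ν Aᶜ := by
  rw [← lintegral_add_compl _ hA]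
  gcongr
  · calc ∫⁻ x in A, min (μ.rnDeriv ν x) 1 ∂ν ≤ ∫⁻ x in A, μ.rnDeriv ν x ∂ν :=
          lintegral_mono fun _ => min_le_left _ _
      _ ≤ μ A := setLIntegral_rnDeriv_le A
  · calc ∫⁻ x in Aᶜ, min (μ.rnDeriv ν x) 1 ∂ν ≤ ∫⁻ _ in Aᶜ, 1 ∂ν :=
          lintegral_mono fun _ => min_le_right _ _
      _ = ν Aᶜ := setLIntegral_one _

theorem lintegral_max_rnDeriv_one_le (μ ν : Measure α) :
    ∫⁻ x, max (μ.rnDeriv ν x) 1 ∂ν ≤ μ Set.univ + ν Set.univ :=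
  calc ∫⁻ x, max (μ.rnDeriv ν x) 1 ∂ν ≤ ∫⁻ x, μ.rnDeriv ν x + 1 ∂ν :=
        lintegral_mono fun _ => max_le_add_of_nonneg zero_le zero_le
    _ = ∫⁻ x, μ.rnDeriv ν x ∂ν + ν Set.univ := by
        rw [lintegral_add_left (measurable_rnDeriv μ ν), lintegral_one]
    _ ≤ μ Set.univ + ν Set.univ := by gcongr; exact lintegral_rnDeriv_le

theorem rnDeriv_mul_ofReal_exp_neg_half_log_ae_eq (μ ν : Measure α) [SigmaFinite μ] :
    (fun x => μ.rnDeriv ν x * ENNReal.ofReal (exp (-(1 / 2) * log (μ.rnDeriv ν x).toReal)))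
      =ᵐ[ν] fun x => μ.rnDeriv ν x ^ (1 / 2 : ℝ) := by
  filter_upwards [rnDeriv_ne_top μ ν] with x hx
  set a := μ.rnDeriv ν x
  rcases eq_or_ne a 0 with h0 | h0
  · simp [h0]
  have ht : 0 < a.toReal := ENNReal.toReal_pos h0 hx
  rw [mul_comm (-(1 / 2) : ℝ), ← rpow_def_of_pos ht]
  nth_rw 1 [← ENNReal.ofReal_toReal hx]
  rw [← ENNReal.ofReal_mul ht.le, ← rpow_one_add' ht.le (by norm_num)]
  conv_rhs => rw [← ENNReal.ofReal_toReal hx, ENNReal.ofReal_rpow_of_pos ht]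
  norm_num

theorem ofReal_exp_neg_half_integral_log_rnDeriv_le (μ ν : Measure α) [IsProbabilityMeasure μ]
    [SigmaFinite ν] (hμν : μ ≪ ν) (hint : Integrable (fun x => log (μ.rnDeriv ν x).toReal) μ) :
    ENNReal.ofReal (exp (-(1 / 2) * ∫ x, log (μ.rnDeriv ν x).toReal ∂μ))
      ≤ ∫⁻ x, μ.rnDeriv ν x ^ (1 / 2 : ℝ) ∂ν :=
  calc ENNReal.ofReal (exp (-(1 / 2) * ∫ x, log (μ.rnDeriv ν x).toReal ∂μ))
      = ENNReal.ofReal (exp (∫ x, -(1 / 2) * log (μ.rnDeriv ν x).toReal ∂μ)) := by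
        rw [integral_const_mul]
    _ ≤ ∫⁻ x, ENNReal.ofReal (exp (-(1 / 2) * log (μ.rnDeriv ν x).toReal)) ∂μ :=
        ENNReal.ofReal_exp_integral_le_lintegral (hint.const_mul _)
    _ = ∫⁻ x, μ.rnDeriv ν x * ENNReal.ofReal (exp (-(1 / 2) * log (μ.rnDeriv ν x).toReal)) ∂ν :=
        (lintegral_rnDeriv_mul hμν (by fun_prop)).symm
    _ = ∫⁻ x, μ.rnDeriv ν x ^ (1 / 2 : ℝ) ∂ν :=
        lintegral_congr_ae (rnDeriv_mul_ofReal_exp_neg_half_log_ae_eq μ ν)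

end MeasureTheory.Measure

theorem expEReal_neg_coe (x : ℝ) : expEReal (-(x : EReal)) = ENNReal.ofReal (exp (-x)) := by
  rw [← EReal.coe_neg, expEReal, if_neg (EReal.coe_ne_top _), if_neg (EReal.coe_ne_bot _),
    EReal.toReal_coe]

/-- **Bretagnolle–Huber inequality.** For probability measures `P, Q` and
any event `A`, `P(A) + Q(Aᶜ) ≥ (1/2) exp(−KL(P,Q))`; when `KL(P,Q) = +∞` the right-hand
side is `0` and the inequality holds trivially. -/
theorem stmt12 {Ω : Type} [MeasurableSpace Ω] (P Q : Measure Ω)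
    [IsProbabilityMeasure P] [IsProbabilityMeasure Q]
    (A : Set Ω) (hA : MeasurableSet A) :
    P A + Q Aᶜ ≥ (1 / 2 : ENNReal) * expEReal (-(klDiv P Q)) := by
  by_cases hKL : P ≪ Q ∧ Integrable (fun x => Real.log (P.rnDeriv Q x).toReal) P
  swap
  · simp [klDiv, if_neg hKL, expEReal]
  set D := ∫ x, log (P.rnDeriv Q x).toReal ∂P
  set Imin := ∫⁻ x, min (P.rnDeriv Q x) 1 ∂Q
  have hBC := Measure.ofReal_exp_neg_half_integral_log_rnDeriv_le P Q hKL.1 hKL.2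
  have hCS := ENNReal.sq_lintegral_rpow_half_mul_le (μ := Q)
    (f := fun x => min (P.rnDeriv Q x) 1) (g := fun x => max (P.rnDeriv Q x) 1)
    (by fun_prop) (by fun_prop)
  simp only [min_mul_max, mul_one] at hCS
  have hmax := Measure.lintegral_max_rnDeriv_one_le P Q
  rw [measure_univ, measure_univ, one_add_one_eq_two] at hmax
  rw [klDiv, if_pos hKL, expEReal_neg_coe, ge_iff_le]
  calc 1 / 2 * ENNReal.ofReal (exp (-D))
      = 1 / 2 * ENNReal.ofReal (exp (-(1 / 2) * D)) ^ 2 := by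
        rw [← ENNReal.ofReal_pow (exp_pos _).le, ← exp_nat_mul]; ring_nf
    _ ≤ 1 / 2 * (Imin * 2) := by grw [hBC, hCS, hmax]
    _ = Imin := by
        rw [mul_comm Imin, ← mul_assoc, ENNReal.div_mul_cancel two_ne_zero ENNReal.ofNat_ne_top,
          one_mul]
    _ ≤ P A + Q Aᶜ := Measure.lintegral_min_rnDeriv_one_le P Q hA
end

section
/- Let (X_t)_{t=1}^{T} be vectors in ℝ^d with ‖X_t‖ ≤ L for all t, let V be a symmetric positive-definite d × d real matrix, and define V̄_t = V + Σ_{τ=1}^{t} X_τ X_τ'. Then Σ_{t=1}^{T} min{1, X_t' V̄_{t−1}^{-1} X_t} ≤ 2 log( det(V̄_T) / det(V) ) ≤ 2 ( d · log( (trace(V) + T L²)/d ) − log det V ). -/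
/-!
Each rank-one update multiplies the determinant by `1 + X_t' V̄_{t-1}⁻¹ X_t` (matrix determinant
lemma), so the sum of `log (1 + X_t' V̄_{t-1}⁻¹ X_t)` telescopes to `log (det V̄_T / det V)`, and
`min 1 a ≤ 2 log (1 + a)` for `a ≥ 0`. For the second inequality, concavity of `log` applied to the
eigenvalues of `V̄_T` gives `log det V̄_T ≤ d log (trace V̄_T / d)`, and
`trace V̄_T = trace V + Σ ‖X_t‖² ≤ trace V + T L²`.
-/

open Matrix

lemma Real.min_one_le_two_mul_log_one_add {a : ℝ} (ha : 0 ≤ a) :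
    min 1 a ≤ 2 * Real.log (1 + a) := by
  rcases le_total a 1 with h | h
  · -- `log (1 + a) ≥ a / (1 + a) ≥ a / 2`
    have hlog : a / (1 + a) ≤ Real.log (1 + a) := by
      have := Real.log_le_sub_one_of_pos (x := (1 + a)⁻¹) (by positivity)
      rw [Real.log_inv, inv_eq_one_div, div_sub_one (by positivity)] at this
      rw [div_eq_mul_inv] at this ⊢
      linarith
    have : a / 2 ≤ a / (1 + a) := div_le_div_of_nonneg_left ha (by positivity) (by linarith)
    rw [min_eq_right h]
    linarith
  · have : Real.log 2 ≤ Real.log (1 + a) := Real.log_le_log (by norm_num) (by linarith)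
    rw [min_eq_left h]
    linarith [Real.log_two_gt_d9]

lemma Real.sum_log_le_card_mul_log_sum_div {ι : Type*} (s : Finset ι) {z : ι → ℝ}
    (hz : ∀ i ∈ s, 0 < z i) :
    ∑ i ∈ s, Real.log (z i) ≤ s.card * Real.log ((∑ i ∈ s, z i) / s.card) := by
  rcases s.eq_empty_or_nonempty with rfl | hs
  · simp
  have hcard : (0 : ℝ) < s.card := by exact_mod_cast hs.card_pos
  have hjensen := strictConcaveOn_log_Ioi.concaveOn.le_map_sum (t := s)
    (w := fun _ => (s.card : ℝ)⁻¹) (p := z) (fun _ _ => by positivity) (by simp [hcard.ne']) hz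
  simp only [smul_eq_mul, ← Finset.mul_sum] at hjensen
  simp only [inv_mul_eq_div] at hjensen
  rwa [div_le_iff₀' hcard] at hjensen

theorem Matrix.det_add_vecMulVec {m α : Type*} [Fintype m] [DecidableEq m] [CommRing α]
    {A : Matrix m m α} (hA : IsUnit A.det) (u v : m → α) :
    (A + vecMulVec u v).det = A.det * (1 + v ⬝ᵥ (A⁻¹ *ᵥ u)) := by
  rw [vecMulVec_eq Unit, det_add_replicateCol_mul_replicateRow hA, Matrix.mul_assoc,
    ← replicateCol_mulVec, det_unique (n := Unit)]
  simp

namespace Matrix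

variable {n : Type*} [Fintype n] [DecidableEq n]

lemma PosDef.dotProduct_inv_mulVec_self_nonneg {A : Matrix n n ℝ} (hA : A.PosDef) (x : n → ℝ) :
    0 ≤ x ⬝ᵥ (A⁻¹ *ᵥ x) := by
  simpa using hA.inv.posSemidef.dotProduct_mulVec_nonneg x

theorem PosDef.log_det_le_card_mul_log_trace_div {A : Matrix n n ℝ} (hA : A.PosDef) :
    Real.log A.det ≤ Fintype.card n * Real.log (A.trace / Fintype.card n) := by
  have hH := hA.isHermitian
  rw [hH.det_eq_prod_eigenvalues, hH.trace_eq_sum_eigenvalues]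
  simp only [RCLike.ofReal_real_eq_id, id]
  rw [Real.log_prod fun i _ => (hA.eigenvalues_pos i).ne']
  exact Real.sum_log_le_card_mul_log_sum_div Finset.univ fun i _ => hA.eigenvalues_pos i

theorem PosDef.log_det_le_card_mul_log_of_trace_le {A : Matrix n n ℝ} (hA : A.PosDef) {B : ℝ}
    (hB : A.trace ≤ B) :
    Real.log A.det ≤ Fintype.card n * Real.log (B / Fintype.card n) := by
  rcases isEmpty_or_nonempty n with hn | hn
  · simp
  have hcard : (0 : ℝ) < Fintype.card n := by exact_mod_cast Fintype.card_pos
  calc Real.log A.det ≤ Fintype.card n * Real.log (A.trace / Fintype.card n) :=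
        hA.log_det_le_card_mul_log_trace_div
    _ ≤ Fintype.card n * Real.log (B / Fintype.card n) := by
        have := div_pos hA.trace_pos hcard
        gcongr

theorem sum_log_one_add_eq_log_det_sub {T : ℕ} (A : ℕ → Matrix n n ℝ) (x : Fin T → n → ℝ)
    (hA : ∀ t ≤ T, (A t).PosDef) (hstep : ∀ t : Fin T, A (t + 1) = A t + vecMulVec (x t) (x t)) :
    ∑ t, Real.log (1 + x t ⬝ᵥ ((A t)⁻¹ *ᵥ x t)) = Real.log (A T).det - Real.log (A 0).det := by
  have hlog_step (t : Fin T) : Real.log (1 + x t ⬝ᵥ ((A t)⁻¹ *ᵥ x t))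
      = Real.log (A (t + 1)).det - Real.log (A t).det := by
    have hAt := hA t t.is_lt.le
    have hq := hAt.dotProduct_inv_mulVec_self_nonneg (x t)
    rw [hstep t, det_add_vecMulVec hAt.det_pos.ne'.isUnit,
      Real.log_mul hAt.det_pos.ne' (by positivity)]
    ring
  rw [Finset.sum_congr rfl fun t _ => hlog_step t,
    Fin.sum_univ_eq_sum_range (fun i => Real.log (A (i + 1)).det - Real.log (A i).det),
    Finset.sum_range_sub (fun i => Real.log (A i).det)]

theorem sum_min_one_le_two_mul_log_det_div {T : ℕ} (A : ℕ → Matrix n n ℝ) (x : Fin T → n → ℝ)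
    (hA : ∀ t ≤ T, (A t).PosDef) (hstep : ∀ t : Fin T, A (t + 1) = A t + vecMulVec (x t) (x t)) :
    ∑ t, min 1 (x t ⬝ᵥ ((A t)⁻¹ *ᵥ x t)) ≤ 2 * Real.log ((A T).det / (A 0).det) := by
  rw [Real.log_div (hA T le_rfl).det_pos.ne' (hA 0 T.zero_le).det_pos.ne',
    ← sum_log_one_add_eq_log_det_sub A x hA hstep, Finset.mul_sum]
  exact Finset.sum_le_sum fun t _ => Real.min_one_le_two_mul_log_one_add
    ((hA t t.is_lt.le).dotProduct_inv_mulVec_self_nonneg (x t))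

end Matrix

/-- **Elliptical potential lemma.** With `V̄_t = V + Σ_{τ≤t} X_τ X_τ'`
(0-based: `Vbar n = V + Σ_{τ < n} X_τ X_τ'`), if `‖X_t‖ ≤ L` for all `t`, then
`Σ_t min{1, X_t' V̄_{t−1}⁻¹ X_t} ≤ 2 log(det V̄_T / det V)
  ≤ 2 (d log((trace V + T L²)/d) − log det V)`. -/
theorem stmt13 (d T : ℕ) (L : ℝ) (X : Fin T → Fin d → ℝ)
    (hX : ∀ t, Real.sqrt (X t ⬝ᵥ X t) ≤ L)
    (V : Matrix (Fin d) (Fin d) ℝ) (hV : V.PosDef)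
    (Vbar : ℕ → Matrix (Fin d) (Fin d) ℝ)
    (hVbar : ∀ n, Vbar n
        = V + ∑ τ ∈ Finset.filter (fun τ : Fin T => (τ : ℕ) < n) Finset.univ,
            vecMulVec (X τ) (X τ)) :
    (∑ t : Fin T, min 1 (X t ⬝ᵥ ((Vbar t)⁻¹ *ᵥ X t)))
        ≤ 2 * Real.log ((Vbar T).det / V.det) ∧
    2 * Real.log ((Vbar T).det / V.det)
        ≤ 2 * ((d : ℝ) * Real.log ((V.trace + T * L ^ 2) / d) - Real.log V.det) := by
  have hPD (k : ℕ) : (Vbar k).PosDef := by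
    rw [hVbar]
    exact hV.add_posSemidef <| posSemidef_sum _ fun τ _ => by
      simpa using posSemidef_vecMulVec_self_star (X τ)
  have hstep (t : Fin T) : Vbar (t + 1) = Vbar t + vecMulVec (X t) (X t) := by
    have hfilter : Finset.filter (fun τ : Fin T => (τ : ℕ) < t + 1) Finset.univ
        = insert t (Finset.filter (fun τ : Fin T => (τ : ℕ) < t) Finset.univ) := by
      ext τ
      simp only [Finset.mem_filter, Finset.mem_univ, true_and, Finset.mem_insert, Fin.ext_iff]
      omega
    rw [hVbar, hVbar, hfilter, Finset.sum_insert (by simp), add_comm (vecMulVec _ _), add_assoc]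
  have htrace : (Vbar T).trace ≤ V.trace + T * L ^ 2 := by
    have hsq (t : Fin T) : X t ⬝ᵥ X t ≤ L ^ 2 := (Real.sqrt_le_iff.mp (hX t)).2
    simpa [hVbar, trace_sum, trace_vecMulVec] using
      Finset.sum_le_sum (s := Finset.univ) fun t _ => hsq t
  have hV0 : Vbar 0 = V := by simp [hVbar]
  refine ⟨hV0 ▸ sum_min_one_le_two_mul_log_det_div Vbar X (fun k _ => hPD k) hstep, ?_⟩
  have hlogdet := (hPD T).log_det_le_card_mul_log_of_trace_le htrace
  rw [Fintype.card_fin] at hlogdet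
  rw [Real.log_div (hPD T).det_pos.ne' hV.det_pos.ne']
  linarith
end
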